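/- arXiv:2201.11324 — 2 statements merged into one kernel-verified Lean document; each statement's English description precedes it below -/
import Mathlib

section
/- Let f : ℝ^d → ℝ be three times continuously differentiable on an open set containing the point x. Define the vector A(h) ∈ ℝ^d by A(h) = 2^{−d} Σ_{Δ ∈ {−1,1}^d} ((f(x+hΔ) − f(x−hΔ))/(2h)) Δ, the uniform average over all sign vectors Δ of the simultaneous-perturbation difference quotient vector. Then there exist constants C > 0 and h₀ > 0 such that for every 0 < h < h₀, ‖A(h) − ∇f(x)‖ ≤ C h², where ‖·‖ is the Euclidean norm. -/
/-!
For a sign vector `Δ`, the difference quotient is the central difference of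
`φ t = f (x + t • Δ) - f (x - t • Δ)`. This `φ` is odd and `C³` near `0`, so its Taylor polynomial
of order three has no even-order terms and `φ h / (2 h) = ⟪∇f x, Δ⟫ + O(h²)`. Averaging
`⟪g, Δ⟫ • Δ` over all sign vectors gives back `g`, because `∑ Δ, Δ j * Δ k = 2 ^ d • δ j k`.
-/

open Finset

noncomputable def signVec (d : ℕ) (s : Fin d → Bool) : EuclideanSpace ℝ (Fin d) :=
  WithLp.toLp 2 (fun k => if s k then 1 else -1)

open Filter Topology Asymptotics

theorem Function.Odd.iteratedDeriv_of_even {φ : ℝ → ℝ} (hφ : φ.Odd) {n : ℕ} (hn : Even n) :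
    (iteratedDeriv n φ).Odd := by
  intro a
  have hφ' : φ = fun t => -φ (-t) := by funext t; rw [hφ, neg_neg]
  conv_rhs => rw [hφ']
  rw [iteratedDeriv_fun_neg, iteratedDeriv_comp_neg, hn.neg_one_pow, one_smul, neg_neg]

theorem Function.Odd.sub_mul_deriv_isBigO {φ : ℝ → ℝ} (hφ : φ.Odd) (hφ3 : ContDiffAt ℝ 3 φ 0) :
    (fun h => φ h - h * deriv φ 0) =O[𝓝 0] fun h => h ^ 3 := by
  obtain ⟨u, hu, hφu⟩ := hφ3.contDiffOn le_rfl (by simp)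
  obtain ⟨ε, hε, hball⟩ := Metric.mem_nhds_iff.1 hu
  have hTaylor := taylor_isLittleO (convex_ball 0 ε) (Metric.mem_ball_self hε) (hφu.mono hball)
  rw [nhdsWithin_eq_nhds.2 (Metric.ball_mem_nhds 0 hε)] at hTaylor
  simp only [sub_zero] at hTaylor
  have hpoly : ∀ h, taylorWithinEval φ 3 (Metric.ball 0 ε) 0 h =
      h * deriv φ 0 + iteratedDeriv 3 φ 0 / 6 * h ^ 3 := by
    intro h
    simp only [taylor_within_apply, iteratedDerivWithin_of_isOpen Metric.isOpen_ball
      (Metric.mem_ball_self hε), sum_range_succ, range_zero, sum_empty,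
      (hφ.iteratedDeriv_of_even (n := 0) (by decide)).map_zero,
      (hφ.iteratedDeriv_of_even (n := 2) (by decide)).map_zero, iteratedDeriv_one, smul_eq_mul]
    simp only [Nat.factorial, Nat.cast_one, inv_one, sub_zero, pow_zero, mul_one, mul_zero,
      add_zero, zero_add, pow_one, one_mul]
    ring
  have hcubic : (fun h : ℝ => iteratedDeriv 3 φ 0 / 6 * h ^ 3) =O[𝓝 0] fun h => h ^ 3 :=
    isBigO_const_mul_self _ _ _
  refine (hTaylor.isBigO.add hcubic).congr_left fun h => ?_
  rw [hpoly]
  ring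

section CentralDifference

variable {E : Type*} [NormedAddCommGroup E] [NormedSpace ℝ E] {f : E → ℝ} {x : E}

theorem ContDiffAt.centralDifference_sub_fderiv_isBigO (hf : ContDiffAt ℝ 3 f x) (v : E) :
    (fun h : ℝ => f (x + h • v) - f (x - h • v) - 2 * h * fderiv ℝ f x v) =O[𝓝 0]
      fun h => h ^ 3 := by
  set φ : ℝ → ℝ := fun t => f (x + t • v) - f (x - t • v)
  have hodd : φ.Odd := fun t => by simp only [φ, neg_smul, sub_neg_eq_add, ← sub_eq_add_neg]; ring
  have hφ : ContDiffAt ℝ 3 φ 0 := by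
    have hplus : ContDiffAt ℝ 3 f (x + (0 : ℝ) • v) := by simpa using hf
    have hminus : ContDiffAt ℝ 3 f (x - (0 : ℝ) • v) := by simpa using hf
    exact (hplus.comp 0 (by fun_prop)).sub (hminus.comp 0 (by fun_prop))
  have hderiv : HasDerivAt φ (2 * fderiv ℝ f x v) 0 := by
    have hplus : HasDerivAt (fun t : ℝ => x + t • v) v 0 := by
      simpa using ((hasDerivAt_id (0 : ℝ)).smul_const v).const_add x
    have hminus : HasDerivAt (fun t : ℝ => x - t • v) (-v) 0 := by
      simpa using ((hasDerivAt_id (0 : ℝ)).smul_const v).const_sub x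
    have hDf := (hf.differentiableAt (by norm_num)).hasFDerivAt
    have := (hDf.comp_hasDerivAt_of_eq 0 hplus (by simp)).sub
      (hDf.comp_hasDerivAt_of_eq 0 hminus (by simp))
    rwa [map_neg, sub_neg_eq_add, ← two_mul] at this
  exact (hodd.sub_mul_deriv_isBigO hφ).congr_left fun h => by simp only [φ, hderiv.deriv]; ring

theorem ContDiffAt.centralDifferenceQuotient_sub_fderiv_isBigO (hf : ContDiffAt ℝ 3 f x)
    (v : E) :
    (fun h : ℝ => (f (x + h • v) - f (x - h • v)) / (2 * h) - fderiv ℝ f x v) =O[𝓝[≠] 0]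
      fun h => h ^ 2 := by
  have hinv : (fun h : ℝ => (2 * h)⁻¹) =O[𝓝[≠] 0] fun h => h⁻¹ :=
    (isBigO_const_mul_self 2⁻¹ _ _).congr_left fun h => by rw [mul_inv]
  refine (hinv.mul ((hf.centralDifference_sub_fderiv_isBigO v).mono nhdsWithin_le_nhds)).congr'
    ?_ ?_ <;> filter_upwards [self_mem_nhdsWithin] with h (hh : h ≠ 0) <;> field_simp

end CentralDifference

theorem signVec_apply_mul_self (d : ℕ) (s : Fin d → Bool) (j : Fin d) :
    signVec d s j * signVec d s j = 1 := by
  cases h : s j <;> simp [signVec, h]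

theorem signVec_update_not_self (d : ℕ) (s : Fin d → Bool) (j : Fin d) :
    signVec d (Function.update s j (!s j)) j = -signVec d s j := by
  cases h : s j <;> simp [signVec, h]

theorem sum_signVec_apply_mul_signVec_apply (d : ℕ) (j k : Fin d) :
    ∑ s : Fin d → Bool, signVec d s j * signVec d s k = if j = k then (2 ^ d : ℝ) else 0 := by
  split_ifs with hjk
  · subst hjk
    simp [signVec_apply_mul_self]
  · -- flipping the `j`-th sign is a bijection that negates every term
    have hflip : Function.Involutive fun s : Fin d → Bool => Function.update s j (!s j) :=
      fun s => by simp
    have hneg : ∀ s : Fin d → Bool, signVec d (Function.update s j (!s j)) j *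
        signVec d (Function.update s j (!s j)) k = -(signVec d s j * signVec d s k) := by
      intro s
      have hk : signVec d (Function.update s j (!s j)) k = signVec d s k := by
        simp [signVec, Function.update_of_ne (Ne.symm hjk)]
      rw [signVec_update_not_self, hk, neg_mul]
    have := Equiv.sum_comp hflip.toPerm fun s => signVec d s j * signVec d s k
    simp only [Function.Involutive.coe_toPerm, hneg, sum_neg_distrib] at this
    linarith

theorem sum_inner_signVec_smul_signVec (d : ℕ) (g : EuclideanSpace ℝ (Fin d)) :
    ∑ s : Fin d → Bool, inner ℝ g (signVec d s) • signVec d s = (2 ^ d : ℝ) • g := by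
  ext k
  simp only [WithLp.ofLp_sum, Finset.sum_apply, PiLp.smul_apply, smul_eq_mul, PiLp.inner_apply,
    RCLike.inner_apply, conj_trivial, sum_mul]
  rw [sum_comm]
  simp_rw [mul_right_comm _ (g _), ← sum_mul, sum_signVec_apply_mul_signVec_apply]
  simp

theorem Asymptotics.IsBigO.exists_pos_bound_nhdsGT_zero {F : Type*} [NormedAddCommGroup F]
    {g : ℝ → F} {n : ℕ} (hg : g =O[𝓝[>] 0] fun h => h ^ n) :
    ∃ C > (0 : ℝ), ∃ h₀ > (0 : ℝ), ∀ h : ℝ, 0 < h → h < h₀ → ‖g h‖ ≤ C * h ^ n := by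
  obtain ⟨C, hC, hbound⟩ := hg.exists_pos
  obtain ⟨h₀, hh₀, hsub⟩ := mem_nhdsGT_iff_exists_Ioo_subset.1 hbound.bound
  refine ⟨C, hC, h₀, hh₀, fun h hpos hlt => ?_⟩
  simpa [abs_of_pos hpos] using hsub ⟨hpos, hlt⟩

/-- Vector-valued `O(h²)` bias bound of Theorem 1: if `f` is three times continuously
differentiable on an open set containing `x`, and `A h` denotes the average over all sign
vectors `Δ ∈ {-1,1}^d` of `((f(x + hΔ) - f(x - hΔ))/(2h)) • Δ`, then there are `C > 0` and
`h₀ > 0` such that `‖A h - ∇f(x)‖ ≤ C h²` for all `0 < h < h₀`. -/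
theorem simultaneous_perturbation_bias_vector (d : ℕ) (f : EuclideanSpace ℝ (Fin d) → ℝ)
    (x : EuclideanSpace ℝ (Fin d)) (U : Set (EuclideanSpace ℝ (Fin d)))
    (hU : IsOpen U) (hxU : x ∈ U) (hf : ContDiffOn ℝ 3 f U)
    (A : ℝ → EuclideanSpace ℝ (Fin d))
    (hA : ∀ h : ℝ, A h = (2 ^ d : ℝ)⁻¹ • ∑ s : Fin d → Bool,
        ((f (x + h • signVec d s) - f (x - h • signVec d s)) / (2 * h)) • signVec d s) :
    ∃ C > (0 : ℝ), ∃ h₀ > (0 : ℝ), ∀ h : ℝ, 0 < h → h < h₀ →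
      ‖A h - gradient f x‖ ≤ C * h ^ 2 := by
  have hfx : ContDiffAt ℝ 3 f x := hf.contDiffAt (hU.mem_nhds hxU)
  have hgrad : gradient f x =
      (2 ^ d : ℝ)⁻¹ • ∑ s : Fin d → Bool, fderiv ℝ f x (signVec d s) • signVec d s := by
    simp_rw [← inner_gradient_left, sum_inner_signVec_smul_signVec,
      inv_smul_smul₀ (pow_ne_zero d (two_ne_zero' ℝ))]
  have hbias : ∀ h, A h - gradient f x = (2 ^ d : ℝ)⁻¹ • ∑ s : Fin d → Bool,
      ((f (x + h • signVec d s) - f (x - h • signVec d s)) / (2 * h)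
        - fderiv ℝ f x (signVec d s)) • signVec d s := fun h => by
    simp only [hA, hgrad, ← smul_sub, ← sum_sub_distrib, sub_smul]
  refine IsBigO.exists_pos_bound_nhdsGT_zero ?_
  simp only [hbias]
  refine (isBigO_const_smul_left (by positivity)).2 (IsBigO.fun_sum fun s _ => ?_)
  exact ((ContinuousLinearMap.toSpanSingleton ℝ (signVec d s)).isBigO_comp _ _).trans
    ((hfx.centralDifferenceQuotient_sub_fderiv_isBigO _).mono (nhdsGT_le_nhdsNE 0))
end

section
/- Let f : ℝ^d → ℝ be three times continuously differentiable on an open set containing the point x. Then there exist constants C > 0 and h₀ > 0 such that for every 0 < h < h₀ and every coordinate i ∈ {1,…,d}, the variance over Δ uniformly distributed on {−1,1}^d of the random variable (f(x+hΔ) − f(x−hΔ))/(2h Δ_i) is at most C. -/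
open Finset MeasureTheory ProbabilityTheory

/-- The uniform probability measure on the set of sign vectors `{-1,1}^d` (identified with
`Fin d → Bool`): each of the `2^d` sign vectors has probability `2⁻ᵈ`. -/
noncomputable def uniformSigns (d : ℕ) : Measure (Fin d → Bool) :=
  (PMF.uniformOfFintype (Fin d → Bool)).toMeasure

/-!
Near `x` the function `f` is `C¹`, hence `K`-Lipschitz on a ball around `x`. Since
`‖Δ‖ = √d` and `|Δᵢ| = 1`, for `h √d` smaller than the radius the difference quotient is bounded
by `K √d` in absolute value, uniformly in `Δ`, `i` and `h`; a random variable with values in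
`[-M, M]` has variance at most `M²` (Popoviciu).
-/

instance (d : ℕ) : IsProbabilityMeasure (uniformSigns d) :=
  PMF.toMeasure.isProbabilityMeasure _

lemma abs_signVec_apply (d : ℕ) (s : Fin d → Bool) (i : Fin d) : |signVec d s i| = 1 := by
  simp only [signVec, PiLp.toLp_apply]
  split_ifs <;> simp

lemma norm_signVec (d : ℕ) (s : Fin d → Bool) : ‖signVec d s‖ = Real.sqrt d := by
  simp [EuclideanSpace.norm_eq, abs_signVec_apply]

lemma variance_le_sq_of_abs_le {Ω : Type*} [MeasurableSpace Ω] {μ : Measure Ω}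
    [IsProbabilityMeasure μ] {X : Ω → ℝ} {M : ℝ} (hX : AEMeasurable X μ) (hM : ∀ ω, |X ω| ≤ M) :
    variance X μ ≤ M ^ 2 := by
  have := variance_le_sq_of_bounded (ae_of_all μ fun ω => Set.mem_Icc.2 (abs_le.1 (hM ω))) hX
  rwa [sub_neg_eq_add, ← two_mul, mul_div_cancel_left₀ _ two_ne_zero] at this

lemma LipschitzOnWith.abs_sub_sub_le {E : Type*} [SeminormedAddCommGroup E] [NormedSpace ℝ E]
    {f : E → ℝ} {K : NNReal} {x v : E} {ε h : ℝ} (hf : LipschitzOnWith K f (Metric.ball x ε))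
    (hh : 0 ≤ h) (hv : h * ‖v‖ < ε) :
    |f (x + h • v) - f (x - h • v)| ≤ K * (2 * h * ‖v‖) := by
  have hmem : ∀ w, ‖w‖ = h * ‖v‖ → x + w ∈ Metric.ball x ε := fun w hw => by
    simpa [hw] using hv
  have h₁ := hmem (h • v) (by rw [norm_smul, Real.norm_of_nonneg hh])
  have h₂ := hmem (-(h • v)) (by rw [norm_neg, norm_smul, Real.norm_of_nonneg hh])
  rw [← sub_eq_add_neg] at h₂
  have hdist : dist (x + h • v) (x - h • v) = 2 * h * ‖v‖ := by
    rw [dist_eq_norm, show x + h • v - (x - h • v) = (2 * h) • v by module, norm_smul,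
      Real.norm_of_nonneg (by positivity)]
  simpa [← Real.dist_eq, hdist] using hf.dist_le_mul _ h₁ _ h₂

lemma abs_signVec_diffQuot_le {d : ℕ} {f : EuclideanSpace ℝ (Fin d) → ℝ}
    {x : EuclideanSpace ℝ (Fin d)} {K : NNReal} {ε h : ℝ}
    (hf : LipschitzOnWith K f (Metric.ball x ε)) (hh : 0 < h) (hhε : h * Real.sqrt d < ε)
    (s : Fin d → Bool) (i : Fin d) :
    |(f (x + h • signVec d s) - f (x - h • signVec d s)) / (2 * h * signVec d s i)|
      ≤ K * Real.sqrt d := by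
  have hnum := hf.abs_sub_sub_le (v := signVec d s) hh.le (by rwa [norm_signVec])
  rw [norm_signVec] at hnum
  rw [abs_div, abs_mul, abs_signVec_apply, abs_of_pos (by positivity : 0 < 2 * h), mul_one,
    div_le_iff₀ (by positivity)]
  linarith

/-- Uniform boundedness (in `h` and `i`) of the perturbation-induced variance of the
simultaneous-perturbation difference quotient, from the proof of Theorem 1: if `f` is three
times continuously differentiable on an open set containing `x`, then there are `C > 0` and
`h₀ > 0` such that for all `0 < h < h₀` and every coordinate `i`, the variance over `Δ`
uniform on `{-1,1}^d` of `(f(x+hΔ) - f(x-hΔ))/(2hΔᵢ)` is at most `C`. -/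
theorem variance_difference_quotient_bounded (d : ℕ) (f : EuclideanSpace ℝ (Fin d) → ℝ)
    (x : EuclideanSpace ℝ (Fin d)) (U : Set (EuclideanSpace ℝ (Fin d)))
    (hU : IsOpen U) (hxU : x ∈ U) (hf : ContDiffOn ℝ 3 f U) :
    ∃ C > (0 : ℝ), ∃ h₀ > (0 : ℝ), ∀ h : ℝ, 0 < h → h < h₀ → ∀ i : Fin d,
      variance (fun s : Fin d → Bool =>
          (f (x + h • signVec d s) - f (x - h • signVec d s)) / (2 * h * signVec d s i))
        (uniformSigns d) ≤ C := by
  have hC1 : ContDiffAt ℝ 1 f x := (hf.contDiffAt (hU.mem_nhds hxU)).of_le (by norm_num)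
  obtain ⟨K, t, ht, hK⟩ := hC1.exists_lipschitzOnWith
  obtain ⟨ε, hε, hball⟩ := Metric.mem_nhds_iff.mp ht
  refine ⟨(K * Real.sqrt d) ^ 2 + 1, by positivity, ε / (Real.sqrt d + 1), by positivity,
    fun h hh hh₀ i => ?_⟩
  have hhε : h * Real.sqrt d < ε := by
    rw [lt_div_iff₀ (by positivity)] at hh₀
    nlinarith
  calc _ ≤ (K * Real.sqrt d) ^ 2 := variance_le_sq_of_abs_le Measurable.of_discrete.aemeasurable
        fun s => abs_signVec_diffQuot_le (hK.mono hball) hh hhε s i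
    _ ≤ _ := le_add_of_nonneg_right zero_le_one
end
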